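/- arXiv:1804.06126 — 2 statements merged into one kernel-verified Lean document; each statement's English description precedes it below -/
import Mathlib

section
/- Let F and G be linear subspaces of ℝⁿ with F ∩ G = {0}, and let θ = ∠(F,G) be the minimal angle between a nonzero vector of F and a nonzero vector of G (so cos θ < 1). Then for every x ∈ F ⊕ G written as x = x_F + x_G with x_F ∈ F and x_G ∈ G, one has ‖x_F‖ + ‖x_G‖ ≤ (2/(1 - cos θ))^{1/2} · ‖x‖, where ‖·‖ is the Euclidean norm. -/
open RealInnerProductSpace

/-!
Write `c` for the supremum of `⟪u, v⟫` over unit vectors `u ∈ F`, `v ∈ G`. Applying it to `xF` and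
`-xG` gives `⟪xF, xG⟫ ≥ -c ‖xF‖ ‖xG‖`, hence
`‖xF + xG‖² ≥ ‖xF‖² + ‖xG‖² - 2c ‖xF‖ ‖xG‖`, and
`2 (‖xF‖² + ‖xG‖² - 2c ‖xF‖ ‖xG‖) - (1 - c) (‖xF‖ + ‖xG‖)² = (1 + c) (‖xF‖ - ‖xG‖)² ≥ 0`.
-/

section CosAngle

variable {E : Type*} [NormedAddCommGroup E] [InnerProductSpace ℝ E]

def cosAngleSet (F G : Submodule ℝ E) : Set ℝ :=
  {r : ℝ | ∃ u ∈ F, ∃ v ∈ G, ‖u‖ = 1 ∧ ‖v‖ = 1 ∧ r = ⟪u, v⟫}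

variable (F G : Submodule ℝ E)

theorem bddAbove_cosAngleSet : BddAbove (cosAngleSet F G) := by
  refine ⟨1, ?_⟩
  rintro r ⟨u, -, v, -, hu, hv, rfl⟩
  simpa [hu, hv] using real_inner_le_norm u v

theorem neg_mem_cosAngleSet {r : ℝ} (hr : r ∈ cosAngleSet F G) : -r ∈ cosAngleSet F G := by
  obtain ⟨u, hu, v, hv, hu1, hv1, rfl⟩ := hr
  exact ⟨u, hu, -v, G.neg_mem hv, hu1, by rwa [norm_neg], (inner_neg_right u v).symm⟩

theorem sSup_cosAngleSet_nonneg : 0 ≤ sSup (cosAngleSet F G) := by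
  rcases (cosAngleSet F G).eq_empty_or_nonempty with hempty | ⟨r, hr⟩
  · rw [hempty, Real.sSup_empty]
  · have hle := le_csSup (bddAbove_cosAngleSet F G) hr
    have hneg := le_csSup (bddAbove_cosAngleSet F G) (neg_mem_cosAngleSet F G hr)
    linarith

theorem inner_le_sSup_cosAngleSet_mul {u v : E} (hu : u ∈ F) (hv : v ∈ G) :
    ⟪u, v⟫ ≤ sSup (cosAngleSet F G) * (‖u‖ * ‖v‖) := by
  rcases eq_or_ne u 0 with rfl | hu0
  · simp
  rcases eq_or_ne v 0 with rfl | hv0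
  · simp
  have hunit : ⟪‖u‖⁻¹ • u, ‖v‖⁻¹ • v⟫ ∈ cosAngleSet F G :=
    ⟨_, F.smul_mem _ hu, _, G.smul_mem _ hv, norm_smul_inv_norm hu0, norm_smul_inv_norm hv0, rfl⟩
  have hle := le_csSup (bddAbove_cosAngleSet F G) hunit
  rw [real_inner_smul_left, real_inner_smul_right, ← mul_assoc, ← mul_inv,
    inv_mul_le_iff₀ (by positivity)] at hle
  linarith

end CosAngle

theorem mul_sq_norm_add_norm_le {E : Type*} [NormedAddCommGroup E] [InnerProductSpace ℝ E]
    {x y : E} {c : ℝ} (hc : -1 ≤ c) (hxy : -(c * (‖x‖ * ‖y‖)) ≤ ⟪x, y⟫) :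
    (1 - c) * (‖x‖ + ‖y‖) ^ 2 ≤ 2 * ‖x + y‖ ^ 2 := by
  rw [norm_add_sq_real]
  nlinarith [mul_nonneg (neg_le_iff_add_nonneg'.mp hc) (sq_nonneg (‖x‖ - ‖y‖))]

theorem le_sqrt_div_mul_of_mul_sq_le {a t c : ℝ} (ht : 0 ≤ t) (hc : c < 1)
    (h : (1 - c) * a ^ 2 ≤ 2 * t ^ 2) : a ≤ Real.sqrt (2 / (1 - c)) * t := by
  have h1c : 0 < 1 - c := sub_pos.mpr hc
  calc a ≤ Real.sqrt (2 / (1 - c) * t ^ 2) := by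
        apply Real.le_sqrt_of_sq_le
        rw [div_mul_eq_mul_div, le_div_iff₀ h1c]
        linarith
    _ = Real.sqrt (2 / (1 - c)) * t := by
        rw [Real.sqrt_mul (by positivity), Real.sqrt_sq ht]

theorem stmt0_general {n : ℕ} (F G : Submodule ℝ (EuclideanSpace ℝ (Fin n)))
    (c : ℝ)
    (hc : c = sSup {r : ℝ | ∃ u ∈ F, ∃ v ∈ G, ‖u‖ = 1 ∧ ‖v‖ = 1 ∧ r = (inner ℝ u v : ℝ)})
    (hclt : c < 1)
    (xF xG : EuclideanSpace ℝ (Fin n)) (hxF : xF ∈ F) (hxG : xG ∈ G) :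
    ‖xF‖ + ‖xG‖ ≤ Real.sqrt (2 / (1 - c)) * ‖xF + xG‖ := by
  change c = sSup (cosAngleSet F G) at hc
  have hc0 : 0 ≤ c := hc ▸ sSup_cosAngleSet_nonneg F G
  have hinner : -(c * (‖xF‖ * ‖xG‖)) ≤ ⟪xF, xG⟫ := by
    have := hc ▸ inner_le_sSup_cosAngleSet_mul F G hxF (G.neg_mem hxG)
    rw [inner_neg_right, norm_neg] at this
    linarith
  exact le_sqrt_div_mul_of_mul_sq_le (norm_nonneg _) hclt
    (mul_sq_norm_add_norm_le (by linarith) hinner)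

/-- Inverse triangle inequality controlled by the angle between two subspaces. -/
theorem stmt0 {n : ℕ} (F G : Submodule ℝ (EuclideanSpace ℝ (Fin n)))
    (hFG : F ⊓ G = ⊥)
    (c : ℝ)
    (hc : c = sSup {r : ℝ | ∃ u ∈ F, ∃ v ∈ G, ‖u‖ = 1 ∧ ‖v‖ = 1 ∧ r = (inner ℝ u v : ℝ)})
    (hclt : c < 1)
    (xF xG : EuclideanSpace ℝ (Fin n)) (hxF : xF ∈ F) (hxG : xG ∈ G) :
    ‖xF‖ + ‖xG‖ ≤ Real.sqrt (2 / (1 - c)) * ‖xF + xG‖ :=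
  stmt0_general F G c hc hclt xF xG hxF hxG
end

section
/- Let A be an n×n real matrix and let ℝⁿ = ⊕_{i=1}^r E_i be the decomposition of ℝⁿ into the generalized eigenspaces of A (i.e. E_i = ker((A − μ_i Id)^{d_i}) over the real forms of the complex generalized eigenspaces). Define the angle ∠(E_1,…,E_r) = min_{1≤j≤r} ∠(E_j, ⊕_{i≠j} E_i) and κ(A) = (2/(1 − cos ∠(E_1,…,E_r)))^{(r−1)/2}. Then for every x ∈ ℝⁿ written as x = Σ_{i=1}^r x_i with x_i ∈ E_i, one has Σ_{i=1}^r ‖x_i‖ ≤ κ(A) · ‖x‖. -/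
/-!
If the cosine of the angle between `u ∈ E j` and `v ∈ ⨁_{i ≠ j} E i` is at most `c < 1`, then
`‖u + v‖² ≥ (1 - c)/2 · (‖u‖ + ‖v‖)²`, i.e. `‖u‖ + ‖v‖ ≤ √(2/(1 - c)) ‖u + v‖`. Splitting off one
summand at a time, each of the `r - 1` splittings costs one factor `√(2/(1 - c))`.
-/

open scoped RealInnerProductSpace

section InnerProductSpace

variable {V : Type*} [NormedAddCommGroup V] [InnerProductSpace ℝ V]

theorem norm_add_norm_le_sqrt_mul_norm_add {u v : V} {c : ℝ} (hc₀ : -1 ≤ c) (hc₁ : c < 1)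
    (h : -⟪u, v⟫ ≤ c * (‖u‖ * ‖v‖)) :
    ‖u‖ + ‖v‖ ≤ √(2 / (1 - c)) * ‖u + v‖ := by
  have hsq : (‖u‖ + ‖v‖) ^ 2 ≤ 2 / (1 - c) * ‖u + v‖ ^ 2 := by
    rw [norm_add_sq_real, div_mul_eq_mul_div, le_div_iff₀ (by linarith)]
    nlinarith [mul_nonneg (neg_le_iff_add_nonneg'.mp hc₀) (sq_nonneg (‖u‖ - ‖v‖))]
  calc ‖u‖ + ‖v‖ = √((‖u‖ + ‖v‖) ^ 2) := (Real.sqrt_sq (by positivity)).symm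
    _ ≤ √(2 / (1 - c) * ‖u + v‖ ^ 2) := Real.sqrt_le_sqrt hsq
    _ = √(2 / (1 - c)) * ‖u + v‖ := by
      rw [Real.sqrt_mul (div_nonneg zero_le_two (by linarith)), Real.sqrt_sq (norm_nonneg _)]

def innerUnitSet (U W : Submodule ℝ V) : Set ℝ :=
  {t | ∃ u ∈ U, ∃ v ∈ W, ‖u‖ = 1 ∧ ‖v‖ = 1 ∧ t = ⟪u, v⟫}

/-- `cos ∠(U, W)`; it is `sSup ∅ = 0` when `U` or `W` is trivial. -/
noncomputable def cosAngle (U W : Submodule ℝ V) : ℝ :=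
  sSup (innerUnitSet U W)

variable {U W : Submodule ℝ V}

theorem bddAbove_innerUnitSet : BddAbove (innerUnitSet U W) := by
  refine ⟨1, ?_⟩
  rintro t ⟨u, -, v, -, hu, hv, rfl⟩
  simpa [hu, hv] using real_inner_le_norm u v

theorem neg_one_le_cosAngle : -1 ≤ cosAngle U W := by
  rcases (innerUnitSet U W).eq_empty_or_nonempty with hempty | ⟨t, ht⟩
  · rw [cosAngle, hempty, Real.sSup_empty]
    norm_num
  · refine le_trans ?_ (le_csSup bddAbove_innerUnitSet ht)
    obtain ⟨u, -, v, -, hu, hv, rfl⟩ := ht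
    simpa [hu, hv] using neg_le_of_abs_le (abs_real_inner_le_norm u v)

theorem inner_le_cosAngle_mul {u v : V} (hu : u ∈ U) (hv : v ∈ W) :
    ⟪u, v⟫ ≤ cosAngle U W * (‖u‖ * ‖v‖) := by
  rcases eq_or_ne u 0 with rfl | hu₀
  · simp
  rcases eq_or_ne v 0 with rfl | hv₀
  · simp
  have hunit : ⟪‖u‖⁻¹ • u, ‖v‖⁻¹ • v⟫ ∈ innerUnitSet U W :=
    ⟨_, U.smul_mem _ hu, _, W.smul_mem _ hv, norm_smul_inv_norm hu₀, norm_smul_inv_norm hv₀, rfl⟩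
  have hle := le_csSup bddAbove_innerUnitSet hunit
  rw [real_inner_smul_left, real_inner_smul_right, ← mul_assoc, ← mul_inv] at hle
  rwa [inv_mul_le_iff₀ (by positivity), mul_comm] at hle

theorem norm_add_norm_le_of_cosAngle_le {u v : V} {c : ℝ} (hc₀ : -1 ≤ c) (hc₁ : c < 1)
    (hUW : cosAngle U W ≤ c) (hu : u ∈ U) (hv : v ∈ W) :
    ‖u‖ + ‖v‖ ≤ √(2 / (1 - c)) * ‖u + v‖ := by
  refine norm_add_norm_le_sqrt_mul_norm_add hc₀ hc₁ ?_
  have h := inner_le_cosAngle_mul hu (W.neg_mem hv)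
  rw [inner_neg_right, norm_neg] at h
  exact h.trans (mul_le_mul_of_nonneg_right hUW (by positivity))

theorem sum_norm_le_pow_mul_norm_sum {ι : Type*} (E : ι → Submodule ℝ V) {K : ℝ} (hK : 1 ≤ K)
    (hpair : ∀ j, ∀ u ∈ E j, ∀ v ∈ ⨆ (i) (_ : i ≠ j), E i, ‖u‖ + ‖v‖ ≤ K * ‖u + v‖)
    {x : ι → V} (hx : ∀ i, x i ∈ E i) (s : Finset ι) :
    ∑ i ∈ s, ‖x i‖ ≤ K ^ (s.card - 1) * ‖∑ i ∈ s, x i‖ := by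
  rcases s.eq_empty_or_nonempty with rfl | hs
  · simp
  induction hs using Finset.Nonempty.cons_induction with
  | singleton a => simp
  | cons a s ha hs ih =>
    have hrest : ∑ i ∈ s, x i ∈ ⨆ (i) (_ : i ≠ a), E i :=
      Submodule.sum_mem _ fun i hi ↦
        Submodule.mem_iSup_of_mem i (Submodule.mem_iSup_of_mem (ne_of_mem_of_not_mem hi ha) (hx i))
    have hcard : (Finset.cons a s ha).card - 1 = (s.card - 1) + 1 := by
      rw [Finset.card_cons]
      have := hs.card_pos
      omega
    rw [Finset.sum_cons, Finset.sum_cons, hcard, pow_succ]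
    calc ‖x a‖ + ∑ i ∈ s, ‖x i‖ ≤ ‖x a‖ + K ^ (s.card - 1) * ‖∑ i ∈ s, x i‖ := by gcongr
      _ ≤ K ^ (s.card - 1) * (‖x a‖ + ‖∑ i ∈ s, x i‖) := by
        nlinarith [one_le_pow₀ (n := s.card - 1) hK, norm_nonneg (x a)]
      _ ≤ K ^ (s.card - 1) * (K * ‖x a + ∑ i ∈ s, x i‖) := by
        gcongr
        exact hpair a _ (hx a) _ hrest
      _ = _ := by ring

end InnerProductSpace

theorem sqrt_pow_sub_one_eq_rpow {K : ℝ} (hK : 0 ≤ K) {r : ℕ} (hr : 1 ≤ r) :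
    √K ^ (r - 1) = K ^ (((r : ℝ) - 1) / 2) := by
  rw [Real.sqrt_eq_rpow, ← Real.rpow_natCast, ← Real.rpow_mul hK, Nat.cast_sub hr]
  ring_nf

theorem stmt3_general {n r : ℕ}
    (E : Fin r → Submodule ℝ (EuclideanSpace ℝ (Fin n)))
    -- cosine of the angle between `E j` and the sum of the other spaces
    (c : Fin r → ℝ)
    (hc : ∀ j, c j = sSup {t : ℝ | ∃ u ∈ E j, ∃ v ∈ (⨆ (i) (_ : i ≠ j), E i),
      ‖u‖ = 1 ∧ ‖v‖ = 1 ∧ t = (inner ℝ u v : ℝ)})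
    (cmax : ℝ) (hcmax : IsGreatest (Set.range c) cmax) (hcm1 : cmax < 1)
    (x : Fin r → EuclideanSpace ℝ (Fin n)) (hx : ∀ i, x i ∈ E i) :
    ∑ i, ‖x i‖ ≤ (2 / (1 - cmax)) ^ (((r : ℝ) - 1) / 2) * ‖∑ i, x i‖ := by
  obtain rfl | hr := Nat.eq_zero_or_pos r
  · simp
  have hcE : ∀ j, cosAngle (E j) (⨆ (i) (_ : i ≠ j), E i) ≤ cmax := fun j ↦
    (hc j).symm.trans_le (hcmax.2 ⟨j, rfl⟩)
  have hcmax₀ : -1 ≤ cmax := neg_one_le_cosAngle.trans (hcE ⟨0, hr⟩)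
  have hK : 1 ≤ √(2 / (1 - cmax)) :=
    Real.one_le_sqrt.2 (by rw [le_div_iff₀ (by linarith)]; linarith)
  have hsum := sum_norm_le_pow_mul_norm_sum E hK
    (fun j _ hu _ hv ↦ norm_add_norm_le_of_cosAngle_le hcmax₀ hcm1 (hcE j) hu hv) hx Finset.univ
  rwa [Finset.card_univ, Fintype.card_fin,
    sqrt_pow_sub_one_eq_rpow (div_nonneg zero_le_two (by linarith)) hr] at hsum

/-- Inverse triangle inequality for the decomposition of `ℝⁿ` into the generalized
eigenspaces of a matrix `A`, with constant `κ(A) = (2/(1 - cos ∠(E₁,…,E_r)))^{(r-1)/2}`. -/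
theorem stmt3 {n r : ℕ} (hr : 0 < r)
    (A : EuclideanSpace ℝ (Fin n) →L[ℝ] EuclideanSpace ℝ (Fin n))
    (E : Fin r → Submodule ℝ (EuclideanSpace ℝ (Fin n)))
    -- the `E i` are the generalized eigenspaces of `A`: they are `A`-invariant …
    (hinv : ∀ i, ∀ x ∈ E i, A x ∈ E i)
    -- … and they decompose `ℝⁿ` as a direct sum
    (hspan : (⨆ i, E i) = ⊤) (hindep : iSupIndep E)
    -- cosine of the angle between `E j` and the sum of the other spaces
    (c : Fin r → ℝ)
    (hc : ∀ j, c j = sSup {t : ℝ | ∃ u ∈ E j, ∃ v ∈ (⨆ (i) (_ : i ≠ j), E i),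
      ‖u‖ = 1 ∧ ‖v‖ = 1 ∧ t = (inner ℝ u v : ℝ)})
    (cmax : ℝ) (hcmax : IsGreatest (Set.range c) cmax) (hcm1 : cmax < 1)
    (x : Fin r → EuclideanSpace ℝ (Fin n)) (hx : ∀ i, x i ∈ E i) :
    ∑ i, ‖x i‖ ≤ (2 / (1 - cmax)) ^ (((r : ℝ) - 1) / 2) * ‖∑ i, x i‖ :=
  stmt3_general E c hc cmax hcmax hcm1 x hx
end
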